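/- arXiv:1806.07308 — 4 statements merged into one kernel-verified Lean document; each statement's English description precedes it below -/
import Mathlib

section
/- Let Y_1, ..., Y_K : ℝ → ℝ be strictly concave functions, with ŷ_k the unique maximizer of Y_k, and suppose ŷ_1 ≥ ŷ_2 ≥ ... ≥ ŷ_K with ŷ_1 > ŷ_K. Then any maximizer (ȳ_1,...,ȳ_K) of ∑_k Y_k(y_k) subject to y_1 ≤ y_2 ≤ ... ≤ y_K satisfies ȳ_1 = ȳ_2 = ... = ȳ_K. -/
/-!
If the optimum `ybar` jumped between adjacent indices `i ⋖ j`, then raising its values below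
`min (ybar j) (yhat i)` to that level, or lowering its values above `max (ybar i) (yhat j)` to that
level, would keep it monotone and move only coordinates towards their peaks. Optimality therefore
forces `yhat i ≤ ybar i < ybar j ≤ yhat j`, contradicting `yhat j ≤ yhat i`. So `ybar` is antitone
as well as monotone, i.e. constant.
-/

open Finset Set

theorem ConcaveOn.strictMonoOn_Iic_of_lt_max {f : ℝ → ℝ} {m : ℝ} (hf : ConcaveOn ℝ univ f)
    (hm : ∀ y ≠ m, f y < f m) : StrictMonoOn f (Iic m) := by
  intro x _ z hz hxz
  rcases (mem_Iic.1 hz).eq_or_lt with rfl | hzm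
  · exact hm x hxz.ne
  · exact hf.left_lt_of_lt_right (mem_univ x) (mem_univ m)
      (Ioo_subset_openSegment ⟨hxz, hzm⟩) (hm z hzm.ne)

theorem ConcaveOn.strictAntiOn_Ici_of_lt_max {f : ℝ → ℝ} {m : ℝ} (hf : ConcaveOn ℝ univ f)
    (hm : ∀ y ≠ m, f y < f m) : StrictAntiOn f (Ici m) := by
  intro z hz x _ hzx
  rcases (mem_Ici.1 hz).eq_or_lt with rfl | hmz
  · exact hm x hzx.ne'
  · refine hf.left_lt_of_lt_right (mem_univ x) (mem_univ m) ?_ (hm z hmz.ne')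
    rw [openSegment_symm]
    exact Ioo_subset_openSegment ⟨hmz, hzx⟩

section Pooling

variable {ι : Type*} [LinearOrder ι] [Fintype ι] {Y : ι → ℝ → ℝ} {yhat ybar : ι → ℝ}

theorem peak_le_of_isMaxOn_sum_of_covBy (hY : ∀ k, StrictMonoOn (Y k) (Iic (yhat k)))
    (hyhat : Antitone yhat) (hybar : Monotone ybar)
    (hopt : IsMaxOn (fun z => ∑ k, Y k (z k)) {z | Monotone z} ybar)
    {i j : ι} (hij : i ⋖ j) (hlt : ybar i < ybar j) : yhat i ≤ ybar i := by
  by_contra! hi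
  set c := min (ybar j) (yhat i)
  have hmove : ∀ k, ybar k < c → Y k (ybar k) < Y k c := fun k hk => by
    have hkj : k < j := hybar.reflect_lt (hk.trans_le (min_le_left _ _))
    have hc : c ≤ yhat k := (min_le_right _ _).trans (hyhat (hij.le_of_lt hkj))
    exact hY k (hk.le.trans hc) hc hk
  have hbetter : ∑ k, Y k (ybar k) < ∑ k, Y k (max (ybar k) c) := by
    refine sum_lt_sum (fun k _ => ?_) ⟨i, mem_univ i, ?_⟩
    · rcases lt_or_ge (ybar k) c with hk | hk
      · rw [max_eq_right hk.le]; exact (hmove k hk).le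
      · rw [max_eq_left hk]
    · have hic : ybar i < c := lt_min hlt hi
      rw [max_eq_right hic.le]; exact hmove i hic
  exact (isMaxOn_iff.1 hopt _ fun _ _ hkl => max_le_max (hybar hkl) le_rfl).not_gt hbetter

theorem le_peak_of_isMaxOn_sum_of_covBy (hY : ∀ k, StrictAntiOn (Y k) (Ici (yhat k)))
    (hyhat : Antitone yhat) (hybar : Monotone ybar)
    (hopt : IsMaxOn (fun z => ∑ k, Y k (z k)) {z | Monotone z} ybar)
    {i j : ι} (hij : i ⋖ j) (hlt : ybar i < ybar j) : ybar j ≤ yhat j := by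
  by_contra! hj
  set d := max (ybar i) (yhat j)
  have hmove : ∀ k, d < ybar k → Y k (ybar k) < Y k d := fun k hk => by
    have hik : i < k := hybar.reflect_lt ((le_max_left _ _).trans_lt hk)
    have hd : yhat k ≤ d := (hyhat (hij.ge_of_gt hik)).trans (le_max_right _ _)
    exact hY k hd (hd.trans hk.le) hk
  have hbetter : ∑ k, Y k (ybar k) < ∑ k, Y k (min (ybar k) d) := by
    refine sum_lt_sum (fun k _ => ?_) ⟨j, mem_univ j, ?_⟩
    · rcases lt_or_ge d (ybar k) with hk | hk
      · rw [min_eq_right hk.le]; exact (hmove k hk).le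
      · rw [min_eq_left hk]
    · have hdj : d < ybar j := max_lt hlt hj
      rw [min_eq_right hdj.le]; exact hmove j hdj
  exact (isMaxOn_iff.1 hopt _ fun _ _ hkl => min_le_min (hybar hkl) le_rfl).not_gt hbetter

theorem antitone_of_isMaxOn_sum [LocallyFiniteOrder ι]
    (hconc : ∀ k, ConcaveOn ℝ univ (Y k)) (hmax : ∀ k, ∀ y ≠ yhat k, Y k y < Y k (yhat k))
    (hyhat : Antitone yhat) (hybar : Monotone ybar)
    (hopt : IsMaxOn (fun z => ∑ k, Y k (z k)) {z | Monotone z} ybar) : Antitone ybar := by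
  refine (antitone_iff_forall_covBy ybar).2 fun i j hij => ?_
  by_contra! hlt
  have hi := peak_le_of_isMaxOn_sum_of_covBy
    (fun k => (hconc k).strictMonoOn_Iic_of_lt_max (hmax k)) hyhat hybar hopt hij hlt
  have hj := le_peak_of_isMaxOn_sum_of_covBy
    (fun k => (hconc k).strictAntiOn_Ici_of_lt_max (hmax k)) hyhat hybar hopt hij hlt
  linarith [hyhat hij.le]

end Pooling

theorem stmt_8 (K : ℕ) (Y : Fin K → ℝ → ℝ)
    (hconc : ∀ k, StrictConcaveOn ℝ Set.univ (Y k))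
    (yhat : Fin K → ℝ)
    (hmax : ∀ k, ∀ y : ℝ, y ≠ yhat k → Y k y < Y k (yhat k))
    (horder : ∀ k l : Fin K, k ≤ l → yhat l ≤ yhat k)
    (ybar : Fin K → ℝ) (hybar : Monotone ybar)
    (hopt : ∀ z : Fin K → ℝ, Monotone z →
      ∑ k, Y k (z k) ≤ ∑ k, Y k (ybar k)) :
    ∀ k l : Fin K, ybar k = ybar l := by
  have hanti : Antitone ybar := antitone_of_isMaxOn_sum (fun k => (hconc k).concaveOn) hmax
    (fun k l hkl => horder k l hkl) hybar (isMaxOn_iff.2 hopt)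
  intro k l
  rcases le_total k l with hkl | hlk
  · exact le_antisymm (hybar hkl) (hanti hkl)
  · exact le_antisymm (hanti hlk) (hybar hlk)
end

section
/- Let Q_1, Q_2 : ℝ → ℝ be unimodal functions (each strictly increasing up to its unique maximizer and strictly decreasing after), with maximizers σ̂_1 > σ̂_2. Then any maximizer (σ̄_1, σ̄_2) of Q_1(σ_1) + Q_2(σ_2) subject to σ_1 ≤ σ_2 satisfies σ̄_1 = σ̄_2. -/
/-! If `σb₁ < σb₂`, the constraint is slack and one coordinate can be improved: when
`σb₁ < σh₁`, raising `σ₁` to `min σh₁ σb₂` strictly increases `Q₁`; otherwise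
`σh₂ < σh₁ ≤ σb₁ < σb₂`, and lowering `σ₂` to `σb₁` strictly increases `Q₂`. -/

open Set

theorem StrictMonoOn.lt_apply_min_of_lt {α β : Type*} [LinearOrder α] [Preorder β]
    {f : α → β} {m x y : α} (hf : StrictMonoOn f (Iic m)) (hxm : x < m) (hxy : x < y) :
    f x < f (min m y) :=
  hf hxm.le (min_le_left m y) (lt_min hxm hxy)

theorem stmt_9_general (Q₁ Q₂ : ℝ → ℝ) (σh₁ σh₂ : ℝ)
    (h₁inc : StrictMonoOn Q₁ (Set.Iic σh₁))
    (h₂dec : StrictAntiOn Q₂ (Set.Ici σh₂))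
    (hσ : σh₂ < σh₁)
    (σb₁ σb₂ : ℝ) (hle : σb₁ ≤ σb₂)
    (hopt : ∀ σ₁ σ₂ : ℝ, σ₁ ≤ σ₂ → Q₁ σ₁ + Q₂ σ₂ ≤ Q₁ σb₁ + Q₂ σb₂) :
    σb₁ = σb₂ := by
  by_contra hne
  have hlt : σb₁ < σb₂ := hle.lt_of_ne hne
  rcases lt_or_ge σb₁ σh₁ with hleft | hright
  · have hgain : Q₁ σb₁ < Q₁ (min σh₁ σb₂) := h₁inc.lt_apply_min_of_lt hleft hlt
    have := hopt (min σh₁ σb₂) σb₂ (min_le_right _ _)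
    linarith
  · have hpast : σh₂ ≤ σb₁ := (hσ.trans_le hright).le
    have hgain : Q₂ σb₂ < Q₂ σb₁ := h₂dec hpast (hpast.trans hle) hlt
    have := hopt σb₁ σb₁ le_rfl
    linarith

theorem stmt_9 (Q₁ Q₂ : ℝ → ℝ) (σh₁ σh₂ : ℝ)
    (h₁inc : StrictMonoOn Q₁ (Set.Iic σh₁)) (h₁dec : StrictAntiOn Q₁ (Set.Ici σh₁))
    (h₂inc : StrictMonoOn Q₂ (Set.Iic σh₂)) (h₂dec : StrictAntiOn Q₂ (Set.Ici σh₂))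
    (hσ : σh₂ < σh₁)
    (σb₁ σb₂ : ℝ) (hle : σb₁ ≤ σb₂)
    (hopt : ∀ σ₁ σ₂ : ℝ, σ₁ ≤ σ₂ → Q₁ σ₁ + Q₂ σ₂ ≤ Q₁ σb₁ + Q₂ σb₂) :
    σb₁ = σb₂ :=
  stmt_9_general Q₁ Q₂ σh₁ σh₂ h₁inc h₂dec hσ σb₁ σb₂ hle hopt
end

section
/- Let V : ℝ × ℝ → ℝ satisfy strictly increasing differences in (σ,t), and let types σ_1 < σ_2 < ... < σ_I with periods 0 ≤ t_1 ≤ t_2 ≤ ... ≤ t_I. Define prices by π_I = V(σ_I, t_I) and π_i = π_{i+1} + V(σ_i, t_i) - V(σ_i, t_{i+1}) for i < I. Then these prices satisfy π_i ≥ π_{i+1} + V(σ_{i+1}, t_i) - V(σ_{i+1}, t_{i+1}) for all i < I. -/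
theorem sub_le_sub_of_strictIncreasingDifferences {α β γ : Type*} [LT α] [PartialOrder β]
    [AddGroup γ] [Preorder γ] {V : α → β → γ}
    (hV : ∀ s s' u u', s' < s → u' < u → V s' u - V s' u' < V s u - V s u')
    {s s' : α} {u u' : β} (hs : s' < s) (hu : u' ≤ u) :
    V s' u - V s' u' ≤ V s u - V s u' := by
  rcases hu.eq_or_lt with rfl | hu
  · simp only [sub_self, le_refl]
  · exact (hV s s' u u' hs hu).le

theorem stmt_14_general (V : ℝ → ℝ → ℝ)
    (hID : ∀ s s' u u' : ℝ, s' < s → u' < u →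
      V s' u - V s' u' < V s u - V s u')
    (I : ℕ) (σ t π : ℕ → ℝ)
    (hσ : ∀ i j, 1 ≤ i → i < j → j ≤ I → σ i < σ j)
    (ht : ∀ i j, 1 ≤ i → i ≤ j → j ≤ I → t i ≤ t j)
    (hπ : ∀ i, 1 ≤ i → i < I → π i = π (i + 1) + V (σ i) (t i) - V (σ i) (t (i + 1))) :
    ∀ i, 1 ≤ i → i < I →
      π i ≥ π (i + 1) + V (σ (i + 1)) (t i) - V (σ (i + 1)) (t (i + 1)) := by
  intro i hi hiI
  have hdiff := sub_le_sub_of_strictIncreasingDifferences hID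
    (hσ i (i + 1) hi i.lt_succ_self hiI) (ht i (i + 1) hi i.le_succ hiI)
  rw [hπ i hi hiI]
  linarith

theorem stmt_14 (V : ℝ → ℝ → ℝ)
    (hID : ∀ s s' u u' : ℝ, s' < s → u' < u →
      V s' u - V s' u' < V s u - V s u')
    (I : ℕ) (hI : 1 ≤ I) (σ t π : ℕ → ℝ)
    (hσ : ∀ i j, 1 ≤ i → i < j → j ≤ I → σ i < σ j)
    (ht0 : 0 ≤ t 1)
    (ht : ∀ i j, 1 ≤ i → i ≤ j → j ≤ I → t i ≤ t j)
    (hπI : π I = V (σ I) (t I))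
    (hπ : ∀ i, 1 ≤ i → i < I → π i = π (i + 1) + V (σ i) (t i) - V (σ i) (t (i + 1))) :
    ∀ i, 1 ≤ i → i < I →
      π i ≥ π (i + 1) + V (σ (i + 1)) (t i) - V (σ (i + 1)) (t (i + 1)) :=
  stmt_14_general V hID I σ t π hσ ht hπ
end

section
/- Define the unit-period valuation V(σ,t) = α(μ - (1/√t) ∫_{√t Δq/σ}^∞ (σx - √t Δq) φ(x) dx) for σ > 0, t > 0, where φ is the standard normal density and Δq, α > 0 are constants. Then ∂V/∂t (σ,t) = (ασ/(2 t^{3/2})) ∫_{√t Δq/σ}^∞ x φ(x) dx > 0. -/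
/-!
Write `a(u) = √u Δq / σ`. Since `(σ x - √u Δq) φ(x) = σ (x - a(u)) φ(x)`, the valuation is
`V(σ, u) = α (μ - σ L(a(u)) / √u)` with `L(a) = ∫_a^∞ (x - a) φ(x) dx` the standard normal loss
function. From `φ' = -x φ` one gets `∫_a^∞ x φ = φ(a)`, hence `L(a) = φ(a) - a Φ̄(a)` and
`L' = -Φ̄`, where `Φ̄` is the normal tail. So `d/ds [L(c s) / s] = -(c s Φ̄(c s) + L(c s)) / s² =
-φ(c s) / s²`: the tail terms cancel, and the chain rule through `s = √u` finishes.
-/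

open MeasureTheory Real

noncomputable def phi (x : ℝ) : ℝ := Real.exp (-x ^ 2 / 2) / Real.sqrt (2 * Real.pi)

noncomputable def Val (α μ Δq σ t : ℝ) : ℝ :=
  α * (μ - (1 / Real.sqrt t) *
    ∫ x in Set.Ioi (Real.sqrt t * Δq / σ), (σ * x - Real.sqrt t * Δq) * phi x)

open Filter Set Topology

theorem hasDerivAt_integral_Ioi {E : Type*} [NormedAddCommGroup E] [NormedSpace ℝ E]
    [CompleteSpace E] {f : ℝ → E} (hf : Integrable f) {a : ℝ} (hfa : ContinuousAt f a) :
    HasDerivAt (fun u => ∫ x in Ioi u, f x) (-f a) a := by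
  have hsplit : (fun u => ∫ x in Ioi u, f x) =
      fun u => (∫ x in Ioi a, f x) - ∫ x in a..u, f x := by
    funext u
    rw [← intervalIntegral.integral_Ioi_sub_Ioi' hf.integrableOn hf.integrableOn, sub_sub_cancel]
  rw [hsplit, ← zero_sub]
  exact (hasDerivAt_const a _).sub <| intervalIntegral.integral_hasDerivAt_right
    hf.intervalIntegrable (hf.aestronglyMeasurable.stronglyMeasurableAtFilter) hfa

lemma phi_pos (x : ℝ) : 0 < phi x := by
  unfold phi
  positivity

lemma continuous_phi : Continuous phi := by
  unfold phi
  fun_prop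

lemma hasDerivAt_phi (x : ℝ) : HasDerivAt phi (-x * phi x) x := by
  have hexp : HasDerivAt (fun y : ℝ => -y ^ 2 / 2) (-x) x :=
    ((hasDerivAt_pow 2 x).neg.div_const 2).congr_deriv (by ring)
  exact (hexp.exp.div_const _).congr_deriv (by unfold phi; ring)

lemma integrable_phi : Integrable phi := by
  convert (integrable_exp_neg_mul_sq (by norm_num : (0 : ℝ) < 1 / 2)).div_const
    (Real.sqrt (2 * Real.pi)) using 2 with x
  unfold phi
  ring_nf

lemma integrable_mul_phi : Integrable fun x => x * phi x := by
  convert (integrable_mul_exp_neg_mul_sq (by norm_num : (0 : ℝ) < 1 / 2)).div_const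
    (Real.sqrt (2 * Real.pi)) using 2 with x
  unfold phi
  ring_nf

lemma tendsto_phi_atTop : Tendsto phi atTop (𝓝 0) := by
  have hexp : Tendsto (fun x : ℝ => -x ^ 2 / 2) atTop atBot :=
    (tendsto_neg_atBot_iff.mpr (tendsto_pow_atTop two_ne_zero)).atBot_div_const two_pos
  rw [← zero_div (Real.sqrt (2 * Real.pi))]
  exact (tendsto_exp_atBot.comp hexp).div_const _

lemma integral_Ioi_mul_phi (a : ℝ) : ∫ x in Ioi a, x * phi x = phi a := by
  have h := integral_Ioi_of_hasDerivAt_of_tendsto (f := fun y => -phi y)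
    (f' := fun y => y * phi y) (a := a) (m := 0)
    continuous_phi.neg.continuousWithinAt
    (fun x _ => (hasDerivAt_phi x).neg.congr_deriv (by ring))
    integrable_mul_phi.integrableOn (by simpa using tendsto_phi_atTop.neg)
  simpa using h

noncomputable def normalTail (a : ℝ) : ℝ := ∫ x in Ioi a, phi x

noncomputable def normalLoss (a : ℝ) : ℝ := ∫ x in Ioi a, (x - a) * phi x

lemma hasDerivAt_normalTail (a : ℝ) : HasDerivAt normalTail (-phi a) a :=
  hasDerivAt_integral_Ioi integrable_phi continuous_phi.continuousAt

lemma normalLoss_eq (a : ℝ) : normalLoss a = phi a - a * normalTail a := by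
  unfold normalLoss normalTail
  simp_rw [sub_mul]
  rw [integral_sub integrable_mul_phi.integrableOn (integrable_phi.integrableOn.const_mul a),
    integral_const_mul, integral_Ioi_mul_phi]

lemma hasDerivAt_normalLoss (a : ℝ) : HasDerivAt normalLoss (-normalTail a) a := by
  rw [show normalLoss = fun b => phi b - b * normalTail b from funext normalLoss_eq]
  exact ((hasDerivAt_phi a).sub ((hasDerivAt_id a).mul (hasDerivAt_normalTail a))).congr_deriv
    (by simp only [id]; ring)

lemma hasDerivAt_normalLoss_mul_div (c : ℝ) {s : ℝ} (hs : s ≠ 0) :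
    HasDerivAt (fun s => normalLoss (s * c) / s) (-phi (s * c) / s ^ 2) s := by
  have hinner := (hasDerivAt_normalLoss (s * c)).comp s (hasDerivAt_mul_const c)
  refine (hinner.div (hasDerivAt_id s) hs).congr_deriv ?_
  simp only [Function.comp_apply, id, normalLoss_eq]
  field_simp
  ring

lemma val_eq_normalLoss (α μ Δq : ℝ) {σ : ℝ} (hσ : σ ≠ 0) (u : ℝ) :
    Val α μ Δq σ u = α * (μ - σ * (normalLoss (Real.sqrt u * Δq / σ) / Real.sqrt u)) := by
  have hintegrand (x : ℝ) : (σ * x - Real.sqrt u * Δq) * phi x =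
      σ * ((x - Real.sqrt u * Δq / σ) * phi x) := by
    field_simp
  unfold Val normalLoss
  simp_rw [hintegrand]
  rw [integral_const_mul]
  ring

lemma rpow_three_halves {t : ℝ} (ht : 0 < t) : t ^ ((3 : ℝ) / 2) = t * Real.sqrt t := by
  rw [show (3 : ℝ) / 2 = 1 + 1 / 2 by norm_num, rpow_add ht, rpow_one, sqrt_eq_rpow]

lemma hasDerivAt_val (α μ Δq : ℝ) {σ t : ℝ} (hσ : σ ≠ 0) (ht : 0 < t) :
    HasDerivAt (fun u => Val α μ Δq σ u)
      (α * σ / (2 * t ^ ((3 : ℝ) / 2)) * phi (Real.sqrt t * Δq / σ)) t := by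
  have hs : Real.sqrt t ≠ 0 := (sqrt_pos.mpr ht).ne'
  have hloss := (hasDerivAt_normalLoss_mul_div (Δq / σ) hs).comp t (hasDerivAt_sqrt ht.ne')
  simp_rw [val_eq_normalLoss α μ Δq hσ, mul_div_assoc]
  refine (((hloss.const_mul σ).const_sub μ).const_mul α).congr_deriv ?_
  rw [rpow_three_halves ht, sq_sqrt ht.le]
  field_simp

theorem stmt_16_general (α μ Δq σ t : ℝ) (hα : 0 < α)
    (hσ : 0 < σ) (ht : 0 < t) :
    HasDerivAt (fun u => Val α μ Δq σ u)
      (α * σ / (2 * t ^ ((3 : ℝ) / 2)) *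
        ∫ x in Set.Ioi (Real.sqrt t * Δq / σ), x * phi x) t ∧
    0 < α * σ / (2 * t ^ ((3 : ℝ) / 2)) *
        ∫ x in Set.Ioi (Real.sqrt t * Δq / σ), x * phi x := by
  rw [integral_Ioi_mul_phi]
  refine ⟨hasDerivAt_val α μ Δq hσ.ne' ht, mul_pos ?_ (phi_pos _)⟩
  positivity

theorem stmt_16 (α μ Δq σ t : ℝ) (hα : 0 < α) (hΔq : 0 < Δq)
    (hσ : 0 < σ) (ht : 0 < t) :
    HasDerivAt (fun u => Val α μ Δq σ u)
      (α * σ / (2 * t ^ ((3 : ℝ) / 2)) *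
        ∫ x in Set.Ioi (Real.sqrt t * Δq / σ), x * phi x) t ∧
    0 < α * σ / (2 * t ^ ((3 : ℝ) / 2)) *
        ∫ x in Set.Ioi (Real.sqrt t * Δq / σ), x * phi x :=
  stmt_16_general α μ Δq σ t hα hσ ht
end
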